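/- arXiv:2412.16865 — 4 statements merged into one kernel-verified Lean document; each statement's English description precedes it below -/
import Mathlib

section
/- If H and H' are subgroups of (Z/nZ)² with |H| = |H'| = n and (Z/nZ)² is the internal direct sum of H and H', then for each generator h of H (assuming H is cyclic generated by h) there exists h' ∈ H' such that ⟨h, h'⟩_s = 1, where ⟨x,y⟩_s = x1y2 − x2y1. -/
/-!
Modulo `n`, the vector `h = (a, b)` pairs symplectically with a Bézout vector to give
`gcd a b`, and `h` is `gcd a b` times another vector. A cyclic direct summand is a pure
subgroup, so `h = d • (k • h)` for some `k`, where `d = gcd a b`; since `h` has order `n`, this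
makes `d` a unit of `ZMod n`, and rescaling gives `x` with `⟨h, x⟩_s = 1`. Decomposing
`x = k • h + h'` along `(Z/nZ)² = H ⊕ H'` leaves `⟨h, h'⟩_s = ⟨h, x⟩_s = 1`.
-/

abbrev G (n : ℕ) := ZMod n × ZMod n

def symp {n : ℕ} (x y : G n) : ZMod n := x.1 * y.2 - x.2 * y.1

section Pure

variable {A : Type*} [AddCommGroup A]

theorem AddSubgroup.exists_mem_zsmul_eq_of_isCompl {H H' : AddSubgroup A} (hc : IsCompl H H')
    {d : ℤ} {g : A} (hg : d • g ∈ H) : ∃ a ∈ H, d • a = d • g := by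
  obtain ⟨a, ha, b, hb, rfl⟩ := AddSubgroup.mem_sup.mp (hc.sup_eq_top ▸ AddSubgroup.mem_top g)
  have hbH : d • b ∈ H := by
    simpa only [smul_add, add_sub_cancel_left] using H.sub_mem hg (H.zsmul_mem ha d)
  have hb0 : d • b = 0 :=
    AddSubgroup.disjoint_def.mp hc.disjoint hbH (H'.zsmul_mem hb d)
  exact ⟨a, ha, by rw [smul_add, hb0, add_zero]⟩

theorem intCast_eq_one_of_zsmul_eq_self {n : ℕ} {h : A} (hord : addOrderOf h = n) {k : ℤ}
    (hk : k • h = h) : (k : ZMod n) = 1 := by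
  rw [← Int.cast_one, ZMod.intCast_eq_intCast_iff_dvd_sub, ← hord]
  exact addOrderOf_dvd_sub_iff_zsmul_eq_zsmul.mpr (by rw [one_smul, hk])

end Pure

namespace symp

variable {n : ℕ}

theorem self_eq_zero (x : G n) : symp x x = 0 := by
  simp only [symp]; ring

theorem add_right (x y z : G n) : symp x (y + z) = symp x y + symp x z := by
  simp only [symp, Prod.fst_add, Prod.snd_add]; ring

theorem zsmul_right (x y : G n) (k : ℤ) : symp x (k • y) = k * symp x y := by
  simp only [symp, Prod.smul_fst, Prod.smul_snd]
  rw [zsmul_eq_mul, zsmul_eq_mul]; ring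

theorem exists_eq_gcd (a b : ℤ) :
    ∃ x : G n, symp ((a : ZMod n), (b : ZMod n)) x = (Int.gcd a b : ℤ) := by
  refine ⟨(((-Int.gcdB a b : ℤ) : ZMod n), ((Int.gcdA a b : ℤ) : ZMod n)), ?_⟩
  rw [Int.gcd_eq_gcd_ab, symp]
  push_cast
  ring

end symp

theorem exists_gcd_zsmul_eq {n : ℕ} (a b : ℤ) :
    ∃ g : G n, (Int.gcd a b : ℤ) • g = ((a : ZMod n), (b : ZMod n)) := by
  obtain ⟨a', ha'⟩ := Int.gcd_dvd_left a b
  obtain ⟨b', hb'⟩ := Int.gcd_dvd_right a b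
  refine ⟨((a' : ZMod n), (b' : ZMod n)), ?_⟩
  rw [Prod.smul_mk, zsmul_eq_mul, zsmul_eq_mul]
  exact Prod.ext (by exact_mod_cast congrArg (Int.cast : ℤ → ZMod n) ha'.symm)
    (by exact_mod_cast congrArg (Int.cast : ℤ → ZMod n) hb'.symm)

theorem exists_symp_eq_one_of_isCompl {n : ℕ} {h : G n} (hord : addOrderOf h = n)
    {H' : AddSubgroup (G n)} (hc : IsCompl (AddSubgroup.zmultiples h) H') :
    ∃ x : G n, symp h x = 1 := by
  obtain ⟨a, ha⟩ := ZMod.intCast_surjective h.1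
  obtain ⟨b, hb⟩ := ZMod.intCast_surjective h.2
  have hab : h = ((a : ZMod n), (b : ZMod n)) := by rw [ha, hb]
  set d : ℤ := (Int.gcd a b : ℤ)
  obtain ⟨g, hg⟩ := exists_gcd_zsmul_eq (n := n) a b
  obtain ⟨y, hy⟩ := symp.exists_eq_gcd (n := n) a b
  rw [← hab] at hg hy
  obtain ⟨_, ⟨k, rfl⟩, hk⟩ := AddSubgroup.exists_mem_zsmul_eq_of_isCompl hc
    (by rw [hg]; exact AddSubgroup.mem_zmultiples h)
  have hunit : ((k * d : ℤ) : ZMod n) = 1 :=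
    intCast_eq_one_of_zsmul_eq_self hord (by rw [mul_smul, smul_comm, hk, hg])
  refine ⟨k • y, ?_⟩
  rw [symp.zsmul_right, hy, ← Int.cast_mul, hunit]

theorem stmt3_general {n : ℕ} (H H' : AddSubgroup (G n))
    (hH : Nat.card H = n)
    (hcompl : IsCompl H H') (h : G n) (hgen : AddSubgroup.zmultiples h = H) :
    ∃ h' ∈ H', symp h h' = 1 := by
  subst hgen
  obtain ⟨x, hx⟩ := exists_symp_eq_one_of_isCompl (Nat.card_zmultiples h ▸ hH) hcompl
  obtain ⟨_, ⟨k, rfl⟩, h', hh', rfl⟩ :=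
    AddSubgroup.mem_sup.mp (hcompl.sup_eq_top ▸ AddSubgroup.mem_top x)
  refine ⟨h', hh', ?_⟩
  rwa [symp.add_right, symp.zsmul_right, symp.self_eq_zero, mul_zero, zero_add] at hx

/-- If `H, H'` are order-`n` subgroups of `(Z/nZ)²` that are complementary, then every
generator `h` of `H` admits `h' ∈ H'` with `⟨h,h'⟩_s = 1`. -/
theorem stmt3 {n : ℕ} (H H' : AddSubgroup (G n))
    (hH : Nat.card H = n) (hH' : Nat.card H' = n)
    (hcompl : IsCompl H H') (h : G n) (hgen : AddSubgroup.zmultiples h = H) :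
    ∃ h' ∈ H', symp h h' = 1 :=
  stmt3_general H H' hH hcompl h hgen
end

section
/- Every subgroup H of (Z/nZ)² of order n satisfies H = H^{⊥s}, where H^{⊥s} = {g : ⟨g,h⟩_s = 0 for all h ∈ H}; conversely, every subgroup H with H = H^{⊥s} has order n. That is, the Lagrangians of (Z/nZ)² (with respect to the symplectic form ⟨x,y⟩_s = x1y2 − x2y1) are precisely the subgroups of order n. -/
def perpS {n : ℕ} (H : Set (G n)) : Set (G n) := {g | ∀ h ∈ H, symp g h = 0}

namespace Lagr
variable {n : ℕ}

lemma smul_pair (a : ℤ) (x y : ZMod n) : a • ((x, y) : G n) = ((a : ZMod n) * x, (a : ZMod n) * y) := by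
  rw [Prod.smul_mk, zsmul_eq_mul, zsmul_eq_mul]

lemma int_mul_div_eq_zero (hn : 0 < n) {d : ℕ} (hd : d ∣ n) (a : ℤ) :
    ((a : ZMod n) * (d : ZMod n) = 0) ↔ (((n / d : ℕ) : ℤ) ∣ a) := by
  have hd0 : (d : ℤ) ≠ 0 := by
    have : 0 < d := Nat.pos_of_dvd_of_pos hd hn
    exact_mod_cast this.ne'
  have h1 : ((a * (d : ℤ) : ℤ) : ZMod n) = (a : ZMod n) * (d : ZMod n) := by push_cast; ring
  rw [← h1, ZMod.intCast_zmod_eq_zero_iff_dvd]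
  have h2 : (n : ℤ) = ((n / d : ℕ) : ℤ) * d := by
    rw [← Nat.cast_mul, Nat.div_mul_cancel hd]
  rw [h2, mul_dvd_mul_iff_right hd0]

lemma int_bounded_dvd {N : ℕ} {a b : ℤ} (h : (N : ℤ) ∣ a - b) (ha : 0 ≤ a) (ha' : a < N)
    (hb : 0 ≤ b) (hb' : b < N) : a = b := by
  obtain ⟨c, hc⟩ := h
  have hN : (0 : ℤ) < N := lt_of_le_of_lt ha ha'
  have h1 : c < 1 := by nlinarith
  have h2 : -1 < c := by nlinarith
  have : c = 0 := by omega
  rw [this, mul_zero] at hc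
  omega

lemma mul_div_eq_zero_iff (hn : 0 < n) {d : ℕ} (hd : d ∣ n) (x : ZMod n) :
    x * (d : ZMod n) = 0 ↔ ∃ k : ZMod n, x = k * ((n / d : ℕ) : ZMod n) := by
  haveI : NeZero n := ⟨hn.ne'⟩
  constructor
  · intro h
    have hx : ((x.val : ℤ) : ZMod n) = x := by push_cast [ZMod.natCast_zmod_val]; ring
    have h' : ((x.val : ℤ) : ZMod n) * (d : ZMod n) = 0 := by rw [hx, h]
    have hdvd : ((n / d : ℕ) : ℤ) ∣ (x.val : ℤ) := (int_mul_div_eq_zero hn hd _).mp h'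
    have hdvd' : (n / d) ∣ x.val := by exact_mod_cast hdvd
    refine ⟨((x.val / (n / d) : ℕ) : ZMod n), ?_⟩
    rw [← Nat.cast_mul, Nat.div_mul_cancel hdvd', ZMod.natCast_zmod_val]
  · rintro ⟨k, rfl⟩
    rw [mul_assoc, ← Nat.cast_mul, Nat.div_mul_cancel hd, ZMod.natCast_self, mul_zero]

lemma exists_divisor_gen (hn : 0 < n) (S : AddSubgroup (ZMod n)) :
    ∃ d : ℕ, d ∣ n ∧ ∀ x : ZMod n, x ∈ S ↔ ∃ k : ZMod n, x = k * (d : ZMod n) := by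
  haveI : NeZero n := ⟨hn.ne'⟩
  obtain ⟨⟨g, hgS⟩, hgen⟩ := IsAddCyclic.exists_generator (α := S)
  have hmem : ∀ x : ZMod n, x ∈ S ↔ ∃ k : ZMod n, x = k * g := by
    intro x
    constructor
    · intro hx
      obtain ⟨k, hk⟩ := AddSubgroup.mem_zmultiples_iff.mp (hgen ⟨x, hx⟩)
      have hk' : k • g = x := congrArg Subtype.val hk
      exact ⟨((k : ℤ) : ZMod n), by rw [← hk', zsmul_eq_mul]⟩
    · rintro ⟨k, rfl⟩
      have : ((k.val : ℤ)) • g = k * g := by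
        rw [zsmul_eq_mul]; push_cast [ZMod.natCast_zmod_val]; ring
      rw [← this]
      exact S.zsmul_mem hgS _
  set d : ℕ := Nat.gcd g.val n with hd
  have hdvd : d ∣ n := Nat.gcd_dvd_right _ _
  have bez := Nat.gcd_eq_gcd_ab g.val n
  have hdg : (d : ZMod n) = (Nat.gcdA g.val n : ZMod n) * g := by
    have : ((d : ℤ) : ZMod n) = (((g.val : ℤ) * Nat.gcdA g.val n + (n : ℤ) * Nat.gcdB g.val n : ℤ) : ZMod n) := by
      exact_mod_cast congrArg (fun z : ℤ => ((z : ZMod n))) bez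
    push_cast [ZMod.natCast_zmod_val, ZMod.natCast_self] at this
    rw [this]; ring
  have hgd : g = ((g.val / d : ℕ) : ZMod n) * (d : ZMod n) := by
    rw [← Nat.cast_mul, Nat.div_mul_cancel (Nat.gcd_dvd_left _ _), ZMod.natCast_zmod_val]
  refine ⟨d, hdvd, fun x => ?_⟩
  rw [hmem]
  constructor
  · rintro ⟨k, rfl⟩
    exact ⟨k * ((g.val / d : ℕ) : ZMod n), by rw [mul_assoc, ← hgd]⟩
  · rintro ⟨k, rfl⟩
    exact ⟨k * (Nat.gcdA g.val n : ZMod n), by rw [mul_assoc, ← hdg]⟩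

def Kgen (n d1 d2 : ℕ) (s : ZMod n) : AddSubgroup (G n) :=
  AddSubgroup.closure {((d1 : ZMod n), (0 : ZMod n)), (s, (d2 : ZMod n))}

lemma mem_Kgen {d1 d2 : ℕ} {s : ZMod n} {x : G n} :
    x ∈ Kgen n d1 d2 s ↔
      ∃ a b : ℤ, a • (((d1 : ZMod n), (0 : ZMod n)) : G n) + b • ((s, (d2 : ZMod n)) : G n) = x :=
  AddSubgroup.mem_closure_pair

lemma u_mem {d1 d2 : ℕ} {s : ZMod n} : (((d1 : ZMod n), (0 : ZMod n)) : G n) ∈ Kgen n d1 d2 s :=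
  AddSubgroup.subset_closure (Set.mem_insert _ _)

lemma v_mem {d1 d2 : ℕ} {s : ZMod n} : ((s, (d2 : ZMod n)) : G n) ∈ Kgen n d1 d2 s :=
  AddSubgroup.subset_closure (Set.mem_insert_of_mem _ rfl)

lemma card_Kgen (hn : 0 < n) {d1 d2 : ℕ} (h1 : d1 ∣ n) (h2 : d2 ∣ n) {s : ZMod n}
    (C : ∃ m : ZMod n, ((n / d2 : ℕ) : ZMod n) * s = m * (d1 : ZMod n)) :
    Nat.card (Kgen n d1 d2 s) = (n / d1) * (n / d2) := by
  haveI : NeZero n := ⟨hn.ne'⟩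
  obtain ⟨m, hm⟩ := C
  set M := n / d1 with hM
  set N := n / d2 with hN
  have hM0 : 0 < M := Nat.div_pos (Nat.le_of_dvd hn h1) (Nat.pos_of_dvd_of_pos h1 hn)
  have hN0 : 0 < N := Nat.div_pos (Nat.le_of_dvd hn h2) (Nat.pos_of_dvd_of_pos h2 hn)
  haveI : NeZero M := ⟨hM0.ne'⟩
  haveI : NeZero N := ⟨hN0.ne'⟩
  have F1 : ((M : ℕ) : ZMod n) * ((d1 : ℕ) : ZMod n) = 0 := by
    rw [← Nat.cast_mul, hM, Nat.div_mul_cancel h1, ZMod.natCast_self]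
  have F2 : ((N : ℕ) : ZMod n) * ((d2 : ℕ) : ZMod n) = 0 := by
    rw [← Nat.cast_mul, hN, Nat.div_mul_cancel h2, ZMod.natCast_self]
  have hmv : ((m.val : ℕ) : ZMod n) = m := ZMod.natCast_zmod_val m
  set u : G n := ((d1 : ZMod n), (0 : ZMod n)) with hu
  set v : G n := (s, (d2 : ZMod n)) with hv
  let f : ZMod M × ZMod N → (Kgen n d1 d2 s) := fun p =>
    ⟨((p.1.val : ℤ)) • u + ((p.2.val : ℤ)) • v, mem_Kgen.mpr ⟨_, _, rfl⟩⟩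
  have hbij : Function.Bijective f := by
    constructor
    · intro p q hpq
      have h := congrArg Subtype.val hpq
      simp only [f, hu, hv, smul_pair, Prod.mk_add_mk, Prod.mk.injEq] at h
      obtain ⟨e1, e2⟩ := h
      have e2' : (((p.2.val : ℤ) - (q.2.val : ℤ) : ℤ) : ZMod n) * (d2 : ZMod n) = 0 := by
        push_cast at e2 ⊢
        linear_combination e2
      have hdvd2 := (int_mul_div_eq_zero hn h2 _).mp e2'
      have hval2 : p.2.val = q.2.val := by
        have := int_bounded_dvd (N := N) hdvd2 (by positivity) (by exact_mod_cast ZMod.val_lt p.2)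
          (by positivity) (by exact_mod_cast ZMod.val_lt q.2)
        exact_mod_cast this
      rw [hval2] at e1
      have e1' : (((p.1.val : ℤ) - (q.1.val : ℤ) : ℤ) : ZMod n) * (d1 : ZMod n) = 0 := by
        push_cast at e1 ⊢
        linear_combination e1
      have hdvd1 := (int_mul_div_eq_zero hn h1 _).mp e1'
      have hval1 : p.1.val = q.1.val := by
        have := int_bounded_dvd (N := M) hdvd1 (by positivity) (by exact_mod_cast ZMod.val_lt p.1)
          (by positivity) (by exact_mod_cast ZMod.val_lt q.1)
        exact_mod_cast this
      exact Prod.ext (ZMod.val_injective _ hval1) (ZMod.val_injective _ hval2)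
    · rintro ⟨x, hx⟩
      obtain ⟨a, b, hab⟩ := mem_Kgen.mp hx
      set a' : ℤ := a + (b / (N : ℤ)) * (m.val : ℤ) with ha'
      refine ⟨(((a' : ℤ) : ZMod M), ((b : ℤ) : ZMod N)), ?_⟩
      apply Subtype.ext
      show (((((a' : ℤ) : ZMod M)).val : ℤ)) • u + ((((b : ℤ) : ZMod N)).val : ℤ) • v = x
      rw [← hab]
      have hA : ((((a' : ℤ) : ZMod M)).val : ℤ) = a' % (M : ℤ) := ZMod.val_intCast a'
      have hB : ((((b : ℤ) : ZMod N)).val : ℤ) = b % (N : ℤ) := ZMod.val_intCast b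
      rw [hA, hB]
      have hdm : (M : ℤ) * (a' / (M : ℤ)) + a' % (M : ℤ) = a' := Int.mul_ediv_add_emod a' M
      have hdn : (N : ℤ) * (b / (N : ℤ)) + b % (N : ℤ) = b := Int.mul_ediv_add_emod b N
      have cA : ((a' % (M : ℤ) : ℤ) : ZMod n) =
          (a : ZMod n) + ((b / (N : ℤ) : ℤ) : ZMod n) * m - ((M : ℕ) : ZMod n) * ((a' / (M : ℤ) : ℤ) : ZMod n) := by
        have : a' % (M : ℤ) = a + (b / (N : ℤ)) * (m.val : ℤ) - (M : ℤ) * (a' / (M : ℤ)) := by omega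
        rw [this]
        push_cast [hmv]
        ring
      have cB : ((b % (N : ℤ) : ℤ) : ZMod n) =
          (b : ZMod n) - ((N : ℕ) : ZMod n) * ((b / (N : ℤ) : ℤ) : ZMod n) := by
        have : b % (N : ℤ) = b - (N : ℤ) * (b / (N : ℤ)) := by omega
        rw [this]
        push_cast
        ring
      simp only [hu, hv, smul_pair, Prod.mk_add_mk, Prod.mk.injEq]
      constructor
      · push_cast at cA cB hm ⊢
        linear_combination cA * (d1 : ZMod n) + cB * s - ((a' / (M : ℤ) : ℤ) : ZMod n) * F1 - ((b / (N : ℤ) : ℤ) : ZMod n) * hm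
      · push_cast at cB ⊢
        linear_combination cB * (d2 : ZMod n) - ((b / (N : ℤ) : ℤ) : ZMod n) * F2
  rw [← Nat.card_eq_of_bijective f hbij, Nat.card_prod, Nat.card_zmod, Nat.card_zmod]

lemma perp_Kgen (hn : 0 < n) {d1 d2 : ℕ} (h1 : d1 ∣ n) (h2 : d2 ∣ n) {s t : ZMod n}
    (ht : t * (d2 : ZMod n) = ((n / d1 : ℕ) : ZMod n) * s) :
    perpS (Kgen n d1 d2 s : Set (G n)) = (Kgen n (n / d2) (n / d1) t : Set (G n)) := by
  haveI : NeZero n := ⟨hn.ne'⟩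
  have F1 : ((n / d1 : ℕ) : ZMod n) * ((d1 : ℕ) : ZMod n) = 0 := by
    rw [← Nat.cast_mul, Nat.div_mul_cancel h1, ZMod.natCast_self]
  have F2 : ((n / d2 : ℕ) : ZMod n) * ((d2 : ℕ) : ZMod n) = 0 := by
    rw [← Nat.cast_mul, Nat.div_mul_cancel h2, ZMod.natCast_self]
  ext g
  obtain ⟨g1, g2⟩ := g
  constructor
  · intro hg
    have hu : symp (g1, g2) ((d1 : ZMod n), (0 : ZMod n)) = 0 := hg _ u_mem
    have hv : symp (g1, g2) (s, (d2 : ZMod n)) = 0 := hg _ v_mem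
    have hu' : g2 * (d1 : ZMod n) = 0 := by
      have := hu
      simp only [symp, mul_zero, zero_sub, neg_eq_zero] at this
      exact this
    have hv' : g1 * (d2 : ZMod n) = g2 * s := by
      have := hv
      simp only [symp, sub_eq_zero] at this
      exact this
    obtain ⟨k, hk⟩ := (mul_div_eq_zero_iff hn h1 g2).mp hu'
    have hw0 : (g1 - k * t) * (d2 : ZMod n) = 0 := by
      have expand : (g1 - k * t) * (d2 : ZMod n) = g1 * d2 - k * (t * d2) := by ring
      rw [expand, hv', ht, hk]
      ring
    obtain ⟨w, hw⟩ := (mul_div_eq_zero_iff hn h2 _).mp hw0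
    refine mem_Kgen.mpr ⟨(w.val : ℤ), (k.val : ℤ), ?_⟩
    have hwv : ((w.val : ℕ) : ZMod n) = w := ZMod.natCast_zmod_val w
    have hkv : ((k.val : ℕ) : ZMod n) = k := ZMod.natCast_zmod_val k
    simp only [smul_pair, Prod.mk_add_mk, Prod.mk.injEq]
    refine ⟨?_, ?_⟩
    · push_cast [hwv, hkv]
      linear_combination -hw
    · push_cast [hkv]
      linear_combination -hk
  · intro hgmem h hh
    obtain ⟨a, b, hab⟩ := mem_Kgen.mp hgmem
    obtain ⟨c, e, hce⟩ := mem_Kgen.mp hh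
    rw [← hab, ← hce]
    simp only [symp, smul_pair, Prod.mk_add_mk]
    push_cast at ht F1 F2 ⊢
    linear_combination ((a : ZMod n) * e) * F2 + ((b : ZMod n) * e) * ht - ((b : ZMod n) * c) * F1

lemma exists_t (hn : 0 < n) {d1 d2 : ℕ} (h1 : d1 ∣ n) (h2 : d2 ∣ n) {s : ZMod n}
    (C : ∃ m : ZMod n, ((n / d2 : ℕ) : ZMod n) * s = m * (d1 : ZMod n)) :
    ∃ t : ZMod n, t * (d2 : ZMod n) = ((n / d1 : ℕ) : ZMod n) * s := by
  haveI : NeZero n := ⟨hn.ne'⟩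
  set M := n / d1 with hM
  set N := n / d2 with hN
  obtain ⟨m, hm⟩ := C
  have hd10 : (d1 : ℤ) ≠ 0 := by
    have : 0 < d1 := Nat.pos_of_dvd_of_pos h1 hn
    exact_mod_cast this.ne'
  have hcast : (((N : ℤ) * (s.val : ℤ) - (m.val : ℤ) * (d1 : ℤ) : ℤ) : ZMod n) = 0 := by
    push_cast [ZMod.natCast_zmod_val]
    linear_combination hm
  obtain ⟨k, hk⟩ := (ZMod.intCast_zmod_eq_zero_iff_dvd _ _).mp hcast
  set T : ℤ := (m.val : ℤ) + (M : ℤ) * k with hT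
  have e1 : (N : ℤ) * (d2 : ℤ) = (n : ℤ) := by
    rw [hN]; exact_mod_cast Nat.div_mul_cancel h2
  have e2 : (d1 : ℤ) * (M : ℤ) = (n : ℤ) := by
    rw [hM]; exact_mod_cast Nat.mul_div_cancel' h1
  have key : (M : ℤ) * (s.val : ℤ) = T * (d2 : ℤ) := by
    apply mul_left_cancel₀ hd10
    rw [hT]
    linear_combination (d2 : ℤ) * hk + (s.val : ℤ) * e2 - (s.val : ℤ) * e1 - k * (d2 : ℤ) * e2
  refine ⟨((T : ℤ) : ZMod n), ?_⟩
  have hfin : (((T * (d2 : ℤ)) : ℤ) : ZMod n) = ((((M : ℕ) : ℤ) * (s.val : ℤ) : ℤ) : ZMod n) := by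
    rw [← key]
  push_cast [ZMod.natCast_zmod_val] at hfin
  linear_combination hfin

lemma exists_canonical (hn : 0 < n) (H : AddSubgroup (G n)) :
    ∃ (d1 d2 : ℕ) (s : ZMod n), d1 ∣ n ∧ d2 ∣ n ∧
      (∃ m : ZMod n, ((n / d2 : ℕ) : ZMod n) * s = m * (d1 : ZMod n)) ∧
      H = Kgen n d1 d2 s := by
  haveI : NeZero n := ⟨hn.ne'⟩
  set A : AddSubgroup (ZMod n) := H.comap (AddMonoidHom.inl (ZMod n) (ZMod n)) with hA
  set B : AddSubgroup (ZMod n) := H.map (AddMonoidHom.snd (ZMod n) (ZMod n)) with hB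
  have hAmem : ∀ x : ZMod n, x ∈ A ↔ ((x, 0) : G n) ∈ H := fun x => Iff.rfl
  obtain ⟨d1, hd1, hAgen⟩ := exists_divisor_gen hn A
  obtain ⟨d2, hd2, hBgen⟩ := exists_divisor_gen hn B
  have hd2B : ((d2 : ZMod n)) ∈ B := (hBgen _).mpr ⟨1, (one_mul _).symm⟩
  obtain ⟨v, hvH, hv2⟩ := AddSubgroup.mem_map.mp hd2B
  have hd1A : ((d1 : ZMod n)) ∈ A := (hAgen _).mpr ⟨1, (one_mul _).symm⟩
  have huH : (((d1 : ZMod n), (0 : ZMod n)) : G n) ∈ H := (hAmem _).mp hd1A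
  have hvpair : v = (v.1, (d2 : ZMod n)) := by
    rw [← hv2]
    rfl
  refine ⟨d1, d2, v.1, hd1, hd2, ?_, ?_⟩
  · -- closure condition
    have hz : (((n / d2 : ℕ) : ℤ)) • v ∈ H := H.zsmul_mem hvH _
    rw [hvpair, smul_pair] at hz
    have h2c : (((n / d2 : ℕ) : ℤ) : ZMod n) * (d2 : ZMod n) = 0 := by
      rw [Int.cast_natCast, ← Nat.cast_mul, Nat.div_mul_cancel hd2, ZMod.natCast_self]
    rw [h2c] at hz
    have : (((n / d2 : ℕ) : ℤ) : ZMod n) * v.1 ∈ A := (hAmem _).mpr hz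
    obtain ⟨m, hm⟩ := (hAgen _).mp this
    refine ⟨m, ?_⟩
    have : (((n / d2 : ℕ) : ℤ) : ZMod n) = ((n / d2 : ℕ) : ZMod n) := Int.cast_natCast _
    rw [← this, hm]
  · -- H = Kgen
    apply le_antisymm
    · intro h hh
      have hh2B : h.2 ∈ B := AddSubgroup.mem_map.mpr ⟨h, hh, rfl⟩
      obtain ⟨k, hk⟩ := (hBgen _).mp hh2B
      have hkv : ((k.val : ℕ) : ZMod n) = k := ZMod.natCast_zmod_val k
      have hzH : h - ((k.val : ℤ)) • v ∈ H := H.sub_mem hh (H.zsmul_mem hvH _)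
      have hz2 : (h - ((k.val : ℤ)) • v).2 = 0 := by
        rw [hvpair, smul_pair]
        show h.2 - ((k.val : ℤ) : ZMod n) * (d2 : ZMod n) = 0
        push_cast [hkv]
        rw [hk]
        ring
      have hzpair : h - ((k.val : ℤ)) • v = ((h - ((k.val : ℤ)) • v).1, 0) := by
        rw [← hz2]
      have hz1A : (h - ((k.val : ℤ)) • v).1 ∈ A := (hAmem _).mpr (by rw [← hzpair]; exact hzH)
      obtain ⟨w, hw⟩ := (hAgen _).mp hz1A
      have hwv : ((w.val : ℕ) : ZMod n) = w := ZMod.natCast_zmod_val w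
      refine mem_Kgen.mpr ⟨(w.val : ℤ), (k.val : ℤ), ?_⟩
      have hz1 : (h - ((k.val : ℤ)) • v).1 = h.1 - ((k.val : ℤ) : ZMod n) * v.1 := by
        rw [hvpair, smul_pair]
        rfl
      rw [hz1] at hw
      have hpe : h = (h.1, h.2) := rfl
      rw [smul_pair, smul_pair, Prod.mk_add_mk, hpe, Prod.mk.injEq]
      constructor
      · push_cast [hwv, hkv]
        push_cast [hwv, hkv] at hw
        linear_combination -hw
      · push_cast [hkv]
        linear_combination -hk
    · rw [Kgen]
      apply AddSubgroup.closure_le H |>.mpr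
      rintro x hx
      rcases hx with rfl | hx2
      · exact huH
      · have : x = (v.1, (d2 : ZMod n)) := hx2
        rw [this, ← hvpair]
        exact hvH

-- closure equality when t - s multiple of d1
lemma Kgen_congr (hn : 0 < n) {d1 d2 : ℕ} {s t w : ZMod n}
    (hw : t - s = w * (d1 : ZMod n)) :
    Kgen n d1 d2 t = Kgen n d1 d2 s := by
  haveI : NeZero n := ⟨hn.ne'⟩
  have hwv : ((w.val : ℕ) : ZMod n) = w := ZMod.natCast_zmod_val w
  apply le_antisymm
  · rw [Kgen]
    apply (AddSubgroup.closure_le _).mpr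
    rintro x hx
    rcases hx with rfl | hx2
    · exact mem_Kgen.mpr ⟨1, 0, by simp⟩
    · have hx3 : x = (t, (d2 : ZMod n)) := hx2
      subst hx3
      refine mem_Kgen.mpr ⟨(w.val : ℤ), 1, ?_⟩
      rw [smul_pair, one_smul, Prod.mk_add_mk, Prod.mk.injEq]
      constructor
      · push_cast [hwv]
        linear_combination -hw
      · ring
  · rw [Kgen]
    apply (AddSubgroup.closure_le _).mpr
    rintro x hx
    rcases hx with rfl | hx2
    · exact mem_Kgen.mpr ⟨1, 0, by simp⟩
    · have hx3 : x = (s, (d2 : ZMod n)) := hx2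
      subst hx3
      refine mem_Kgen.mpr ⟨-(w.val : ℤ), 1, ?_⟩
      rw [smul_pair, one_smul, Prod.mk_add_mk, Prod.mk.injEq]
      constructor
      · push_cast [hwv]
        linear_combination hw
      · ring

end Lagr

open Lagr in
/-- Lagrangians of `(Z/nZ)²` are precisely the subgroups of order `n`. -/
theorem stmt6 {n : ℕ} (hn : 0 < n) (H : AddSubgroup (G n)) :
    Nat.card H = n ↔ perpS (H : Set (G n)) = (H : Set (G n)) := by
  obtain ⟨d1, d2, s, h1, h2, C, rfl⟩ := exists_canonical hn H
  obtain ⟨t, ht⟩ := exists_t hn h1 h2 C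
  have hperp := perp_Kgen hn h1 h2 ht
  have hd10 : 0 < d1 := Nat.pos_of_dvd_of_pos h1 hn
  have hd20 : 0 < d2 := Nat.pos_of_dvd_of_pos h2 hn
  have e1 : d1 * (n / d1) = n := Nat.mul_div_cancel' h1
  have e2 : d2 * (n / d2) = n := Nat.mul_div_cancel' h2
  have hcard : Nat.card (Kgen n d1 d2 s) = (n / d1) * (n / d2) := card_Kgen hn h1 h2 C
  have C' : ∃ m' : ZMod n, ((n / (n / d1) : ℕ) : ZMod n) * t = m' * ((n / d2 : ℕ) : ZMod n) := by
    rw [Nat.div_div_self h1 hn.ne']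
    apply (mul_div_eq_zero_iff hn h2 ((d1 : ZMod n) * t)).mp
    have hfac : (d1 : ZMod n) * t * (d2 : ZMod n) = (d1 : ZMod n) * (t * (d2 : ZMod n)) := by ring
    rw [hfac, ht, ← mul_assoc, ← Nat.cast_mul, e1, ZMod.natCast_self, zero_mul]
  have hcard' : Nat.card (Kgen n (n / d2) (n / d1) t) = (n / (n / d2)) * (n / (n / d1)) :=
    card_Kgen hn (Nat.div_dvd_of_dvd h2) (Nat.div_dvd_of_dvd h1) C'
  rw [Nat.div_div_self h2 hn.ne', Nat.div_div_self h1 hn.ne'] at hcard'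
  rw [hcard]
  constructor
  · intro hcn
    have hd12 : d1 * d2 = n := by
      have hmul : (d1 * d2) * ((n / d1) * (n / d2)) = n * n := by
        calc (d1 * d2) * ((n / d1) * (n / d2)) = (d1 * (n / d1)) * (d2 * (n / d2)) := by ring
          _ = n * n := by rw [e1, e2]
      rw [hcn] at hmul
      exact Nat.eq_of_mul_eq_mul_right hn hmul
    have hnd2 : n / d2 = d1 := by rw [← hd12, Nat.mul_div_cancel _ hd20]
    have hnd1 : n / d1 = d2 := by rw [← hd12, Nat.mul_div_cancel_left _ hd10]
    rw [hperp, hnd2, hnd1]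
    have hts : (t - s) * (d2 : ZMod n) = 0 := by
      rw [sub_mul, ht, hnd1]
      ring
    obtain ⟨w, hw⟩ := (mul_div_eq_zero_iff hn h2 _).mp hts
    rw [hnd2] at hw
    rw [Kgen_congr hn hw]
  · intro hpe
    rw [hperp] at hpe
    have heq : Kgen n (n / d2) (n / d1) t = Kgen n d1 d2 s := SetLike.coe_injective hpe
    have hceq : d2 * d1 = (n / d1) * (n / d2) := by rw [← hcard', ← hcard, heq]
    have hnn : ((n / d1) * (n / d2)) * ((n / d1) * (n / d2)) = n * n := by
      calc ((n / d1) * (n / d2)) * ((n / d1) * (n / d2))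
          = ((n / d1) * (n / d2)) * (d2 * d1) := by rw [← hceq]
        _ = (d1 * (n / d1)) * (d2 * (n / d2)) := by ring
        _ = n * n := by rw [e1, e2]
    rcases Nat.lt_trichotomy ((n / d1) * (n / d2)) n with h | h | h
    · exfalso; nlinarith
    · exact h
    · exfalso; nlinarith
end

section
/- Let H be a subgroup of (Z/nZ)² and A ⊆ (Z/nZ)². Then (A, H) is a tiling pair of (Z/nZ)² if and only if |A|·|H| = n² and Δ(H^{⊥s}) ⊆ Z(1̂_A^{sym}), where Δ(H^{⊥s}) = (H^{⊥s} \ {0}) is the difference set of the subgroup H^{⊥s}, and Z(1̂_A^{sym}) = {ξ : ∑_{a∈A} e^{2πi⟨a,ξ⟩_s/n} = 0}. -/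
open Complex

noncomputable def sF {n : ℕ} (A : Finset (G n)) (ξ : G n) : ℂ :=
  ∑ a ∈ A, Complex.exp (2 * Real.pi * Complex.I * ((symp a ξ).val : ℂ) / (n : ℂ))

/-- `(A,H)` is a tiling pair (H a subgroup). -/
def IsTilingPairSub {n : ℕ} (A : Finset (G n)) (H : AddSubgroup (G n)) : Prop :=
  ∀ g : G n, ∃! p : G n × G n, (p.1 ∈ A ∧ p.2 ∈ H) ∧ p.1 + p.2 = g

namespace Stmt10Aux

variable {n : ℕ} [NeZero n]

/-- `x ↦ symp x ξ` as an additive hom. -/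
def sympHom (ξ : G n) : G n →+ ZMod n where
  toFun x := symp x ξ
  map_zero' := by simp [symp]
  map_add' x y := by simp only [symp, Prod.fst_add, Prod.snd_add]; ring

/-- The character `x ↦ e(symp x ξ / n)`. -/
noncomputable def χ (ξ : G n) : AddChar (G n) ℂ :=
  ZMod.stdAddChar.compAddMonoidHom (sympHom ξ)

lemma χ_apply (ξ x : G n) : χ ξ x = ZMod.stdAddChar (symp x ξ) := rfl

lemma std_eq_one_iff {c : ZMod n} : ZMod.stdAddChar c = 1 ↔ c = 0 := by
  constructor
  · intro h
    have h0 : ZMod.stdAddChar c = ZMod.stdAddChar (0 : ZMod n) := by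
      simpa using h
    exact ZMod.injective_stdAddChar h0
  · rintro rfl; simp

lemma sF_eq (A : Finset (G n)) (ξ : G n) : sF A ξ = ∑ a ∈ A, χ ξ a := by
  refine Finset.sum_congr rfl fun a _ => ?_
  rw [χ_apply, ZMod.stdAddChar_apply, ZMod.toCircle_apply]

lemma symp_antisymm (x y : G n) : symp x y = - symp y x := by
  simp only [symp]; ring

lemma chi_eq_zero_iff {ξ : G n} : χ ξ = 0 ↔ ξ = 0 := by
  constructor
  · intro h
    have h1 : χ ξ ((0 : ZMod n), (-1 : ZMod n)) = 1 := by rw [h]; simp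
    have h2 : χ ξ ((1 : ZMod n), (0 : ZMod n)) = 1 := by rw [h]; simp
    rw [χ_apply, std_eq_one_iff] at h1 h2
    simp only [symp, zero_mul, neg_one_mul, zero_sub, neg_neg, one_mul, sub_zero] at h1 h2
    exact Prod.ext h1 h2
  · rintro rfl
    ext x
    simp [χ_apply, symp, std_eq_one_iff]

lemma card_G : Fintype.card (G n) = n ^ 2 := by
  simp [ZMod.card]; ring

lemma sum_chi (ξ : G n) : ∑ x : G n, χ ξ x = if ξ = 0 then ((n : ℂ) ^ 2) else 0 := by
  classical
  rw [AddChar.sum_eq_ite]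
  rw [card_G]
  by_cases h : ξ = 0
  · simp [h, chi_eq_zero_iff]
  · rw [if_neg (by rwa [chi_eq_zero_iff]), if_neg h]

lemma sum_chi' (x : G n) : ∑ ξ : G n, χ ξ x = if x = 0 then ((n : ℂ) ^ 2) else 0 := by
  have h : ∀ ξ : G n, χ ξ x = χ (-x) ξ := by
    intro ξ
    rw [χ_apply, χ_apply]
    congr 1
    simp only [symp, Prod.fst_neg, Prod.snd_neg]
    ring
  simp_rw [h]
  rw [sum_chi]
  simp [neg_eq_zero]

/-- The subgroup as a finset. -/
noncomputable def Hf (H : AddSubgroup (G n)) : Finset (G n) :=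
  Set.Finite.toFinset (Set.toFinite (H : Set (G n)))

lemma mem_Hf {H : AddSubgroup (G n)} {x : G n} : x ∈ Hf H ↔ x ∈ H := by
  simp [Hf]

lemma card_Hf (H : AddSubgroup (G n)) : (Hf H).card = Nat.card H := by
  rw [Hf, ← Set.ncard_eq_toFinset_card (H : Set (G n)) (Set.toFinite _),
    ← Nat.card_coe_set_eq]
  rfl

lemma sum_chi_H (H : AddSubgroup (G n)) (ξ : G n)
    [Decidable (ξ ∈ perpS (H : Set (G n)))] :
    ∑ h ∈ Hf H, χ ξ h =
      if ξ ∈ perpS (H : Set (G n)) then ((Nat.card H : ℂ)) else 0 := by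
  classical
  have hsub : ∑ h ∈ Hf H, χ ξ h = ∑ x : H, ((χ ξ).compAddMonoidHom H.subtype) x := by
    exact Finset.sum_subtype (Hf H) (fun x => mem_Hf) _
  rw [hsub, AddChar.sum_eq_ite]
  have hzero : ((χ ξ).compAddMonoidHom H.subtype) = 0 ↔ ξ ∈ perpS (H : Set (G n)) := by
    constructor
    · intro h0 h hh
      have h1 : ((χ ξ).compAddMonoidHom H.subtype) ⟨h, hh⟩ = 1 := by rw [h0]; simp
      rw [AddChar.compAddMonoidHom_apply] at h1
      have hs : symp h ξ = 0 := std_eq_one_iff.mp h1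
      rw [symp_antisymm, hs, neg_zero]
    · intro hp
      ext x
      rw [AddChar.compAddMonoidHom_apply, AddChar.zero_apply, χ_apply, std_eq_one_iff,
        show H.subtype x = (x.1 : G n) from rfl, symp_antisymm, hp x.1 x.2, neg_zero]
  by_cases h : ξ ∈ perpS (H : Set (G n))
  · rw [if_pos (hzero.2 h), if_pos h, Nat.card_eq_fintype_card]
  · rw [if_neg (fun hz => h (hzero.1 hz)), if_neg h]

variable (A : Finset (G n)) (H : AddSubgroup (G n))

/-- number of representations of `g` as `a + h`. -/
noncomputable def rep (g : G n) : Finset (G n × G n) :=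
  (A ×ˢ Hf H).filter (fun p => p.1 + p.2 = g)

lemma mem_rep {g : G n} {p : G n × G n} :
    p ∈ rep A H g ↔ (p.1 ∈ A ∧ p.2 ∈ H) ∧ p.1 + p.2 = g := by
  simp [rep, Finset.mem_filter, Finset.mem_product, mem_Hf]

lemma tiling_iff_card :
    IsTilingPairSub A H ↔ ∀ g : G n, (rep A H g).card = 1 := by
  classical
  refine forall_congr' fun g => ?_
  rw [Finset.card_eq_one]
  constructor
  · rintro ⟨p, hp, hu⟩
    refine ⟨p, ?_⟩
    ext q
    simp only [Finset.mem_singleton]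
    constructor
    · intro hq; exact hu q (mem_rep A H |>.1 hq)
    · rintro rfl; exact (mem_rep A H).2 hp
  · rintro ⟨p, hp⟩
    refine ⟨p, (mem_rep A H).1 (by simp [hp]), fun q hq => ?_⟩
    have : q ∈ rep A H g := (mem_rep A H).2 hq
    rw [hp, Finset.mem_singleton] at this
    exact this

lemma key (ξ : G n) :
    sF A ξ * (∑ h ∈ Hf H, χ ξ h) =
      ∑ g : G n, ((rep A H g).card : ℂ) * χ ξ g := by
  classical
  rw [sF_eq, Finset.sum_mul_sum]
  have h1 : ∀ a ∈ A, ∀ h ∈ Hf H, χ ξ a * χ ξ h = χ ξ (a + h) := by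
    intro a _ h _
    rw [AddChar.map_add_eq_mul]
  calc ∑ a ∈ A, ∑ h ∈ Hf H, χ ξ a * χ ξ h
      = ∑ a ∈ A, ∑ h ∈ Hf H, χ ξ (a + h) := by
        refine Finset.sum_congr rfl fun a ha => Finset.sum_congr rfl fun h hh => h1 a ha h hh
    _ = ∑ p ∈ A ×ˢ Hf H, χ ξ (p.1 + p.2) := by rw [Finset.sum_product]
    _ = ∑ g : G n, ∑ p ∈ (A ×ˢ Hf H).filter (fun p => p.1 + p.2 = g), χ ξ (p.1 + p.2) := by
        rw [Finset.sum_fiberwise (A ×ˢ Hf H) (fun p => p.1 + p.2) (fun p => χ ξ (p.1 + p.2))]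
    _ = ∑ g : G n, ((rep A H g).card : ℂ) * χ ξ g := by
        refine Finset.sum_congr rfl fun g _ => ?_
        have : ∑ p ∈ (A ×ˢ Hf H).filter (fun p => p.1 + p.2 = g), χ ξ (p.1 + p.2)
            = ∑ p ∈ (A ×ˢ Hf H).filter (fun p => p.1 + p.2 = g), χ ξ g := by
          refine Finset.sum_congr rfl fun p hp => ?_
          rw [(Finset.mem_filter.1 hp).2]
        rw [this, Finset.sum_const, nsmul_eq_mul]
        rfl

lemma chi_zero_apply (x : G n) : χ (0 : G n) x = 1 := by
  rw [χ_apply, std_eq_one_iff]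
  simp [symp]

end Stmt10Aux

/-- `A` complements the subgroup `H` iff `|A|·|H| = n²` and the difference set of `H^{⊥s}`
lies in the zero set of the symplectic Fourier transform of `A`. -/
theorem stmt10 {n : ℕ} [NeZero n] (A : Finset (G n)) (H : AddSubgroup (G n)) :
    IsTilingPairSub A H ↔
      (A.card * Nat.card H = n ^ 2 ∧
        ∀ g ∈ perpS (H : Set (G n)), g ≠ 0 → sF A g = 0) := by
  classical
  open Stmt10Aux in
  rw [Stmt10Aux.tiling_iff_card]
  have hn : ((n : ℂ)) ^ 2 ≠ 0 := pow_ne_zero _ (Nat.cast_ne_zero.2 (NeZero.ne n))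
  constructor
  · intro ht
    constructor
    · have h1 : (A ×ˢ Hf H).card = ∑ g : G n, (rep A H g).card :=
        Finset.card_eq_sum_card_fiberwise (f := fun p : G n × G n => p.1 + p.2)
          (t := Finset.univ) (fun p _ => Finset.mem_univ _)
      rw [Finset.card_product, card_Hf] at h1
      simp_rw [ht] at h1
      rw [h1, Finset.sum_const, Finset.card_univ, card_G, smul_eq_mul, mul_one]
    · intro g hg hg0
      have hk := key A H g
      have hs : ∑ g' : G n, ((rep A H g').card : ℂ) * χ g g' = 0 := by
        simp_rw [ht]
        simp only [Nat.cast_one, one_mul]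
        rw [sum_chi, if_neg hg0]
      rw [hs, sum_chi_H, if_pos hg] at hk
      rcases mul_eq_zero.mp hk with h | h
      · exact h
      · exact absurd h (Nat.cast_ne_zero.2 (Nat.card_ne_zero.2 ⟨⟨⟨0, H.zero_mem⟩⟩, inferInstance⟩))
  · rintro ⟨hcard, hzero⟩ g
    have h0perp : (0 : G n) ∈ perpS (H : Set (G n)) := by
      intro h _; simp [symp]
    have e1 : ∑ ξ : G n, (sF A ξ * (∑ h ∈ Hf H, χ ξ h)) * χ ξ (-g) = (n : ℂ) ^ 2 := by
      rw [Fintype.sum_eq_single (0 : G n)]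
      · rw [sum_chi_H, if_pos h0perp, chi_zero_apply, sF_eq]
        simp_rw [chi_zero_apply]
        rw [Finset.sum_const, nsmul_eq_mul, mul_one, mul_one]
        have := congrArg (Nat.cast : ℕ → ℂ) hcard
        push_cast at this ⊢
        exact this
      · intro ξ hξ
        by_cases hp : ξ ∈ perpS (H : Set (G n))
        · rw [hzero ξ hp hξ, zero_mul, zero_mul]
        · rw [sum_chi_H, if_neg hp, mul_zero, zero_mul]
    have e2 : ∑ ξ : G n, (sF A ξ * (∑ h ∈ Hf H, χ ξ h)) * χ ξ (-g)
        = ((rep A H g).card : ℂ) * (n : ℂ) ^ 2 := by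
      have step : ∀ ξ : G n,
          (sF A ξ * (∑ h ∈ Hf H, χ ξ h)) * χ ξ (-g)
            = ∑ g' : G n, ((rep A H g').card : ℂ) * χ ξ (g' + -g) := by
        intro ξ
        rw [key A H ξ, Finset.sum_mul]
        refine Finset.sum_congr rfl fun g' _ => ?_
        rw [mul_assoc, AddChar.map_add_eq_mul]
      simp_rw [step]
      rw [Finset.sum_comm]
      have inner : ∀ g' : G n,
          ∑ ξ : G n, ((rep A H g').card : ℂ) * χ ξ (g' + -g)
            = ((rep A H g').card : ℂ) * (if g' + -g = 0 then (n : ℂ) ^ 2 else 0) := by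
        intro g'
        rw [← Finset.mul_sum, sum_chi']
      simp_rw [inner]
      rw [Fintype.sum_eq_single g]
      · simp
      · intro g' hne
        rw [if_neg (by simpa [add_neg_eq_zero] using hne), mul_zero]
    have hc : ((rep A H g).card : ℂ) = 1 :=
      mul_right_cancel₀ hn (by rw [← e2, e1, one_mul])
    exact_mod_cast hc
end

section
/- (Counting Lemma) Let p be prime, m ≥ 1, and x ∈ (Z/nZ)² an element of order p^m, and A ⊆ (Z/nZ)² a finite set. If the symplectic Fourier transform of the indicator of A vanishes at x (i.e. ∑_{a∈A} e^{2πi⟨a,x⟩_s/n} = 0), then |A ∩ ⟨px⟩^{⊥s}| = p · |A ∩ ⟨x⟩^{⊥s}|. -/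
open Complex

lemma symp_zsmul_right {n : ℕ} (g y : G n) (k : ℤ) :
    symp g (k • y) = (k : ZMod n) * symp g y := by
  have h1 : (k • y).1 = (k : ZMod n) * y.1 := by rw [Prod.smul_fst, zsmul_eq_mul]
  have h2 : (k • y).2 = (k : ZMod n) * y.2 := by rw [Prod.smul_snd, zsmul_eq_mul]
  simp only [symp, h1, h2]
  ring

lemma mem_perpS_zmultiples {n : ℕ} (g y : G n) :
    g ∈ perpS ((AddSubgroup.zmultiples y : AddSubgroup (G n)) : Set (G n)) ↔ symp g y = 0 := by
  constructor
  · intro h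
    exact h y (AddSubgroup.mem_zmultiples y)
  · intro h z hz
    obtain ⟨k, rfl⟩ := AddSubgroup.mem_zmultiples_iff.mp hz
    rw [symp_zsmul_right, h, mul_zero]

lemma geom_root {M : ℕ} (w : ℂ) (hw : w ^ M = 1) :
    ∑ k ∈ Finset.range M, w ^ k = if w = 1 then (M : ℂ) else 0 := by
  split_ifs with h
  · simp [h]
  · rw [geom_sum_eq h, hw]
    simp

/-- Counting lemma: if `ord(x) = p^m` and the symplectic Fourier transform of `A` vanishes
at `x`, then `|A ∩ ⟨px⟩^{⊥s}| = p · |A ∩ ⟨x⟩^{⊥s}|`. -/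
theorem stmt11 {n : ℕ} [NeZero n] (p : ℕ) (hp : p.Prime) (m : ℕ) (hm : 1 ≤ m)
    (x : G n) (hx : addOrderOf x = p ^ m) (A : Finset (G n)) (hA : sF A x = 0) :
    ((A : Set (G n)) ∩ perpS ((AddSubgroup.zmultiples (p • x) : AddSubgroup (G n)) : Set (G n))).ncard
      = p * ((A : Set (G n)) ∩ perpS ((AddSubgroup.zmultiples x : AddSubgroup (G n)) : Set (G n))).ncard := by
  classical
  obtain ⟨m', rfl⟩ : ∃ m', m = m' + 1 := ⟨m - 1, by omega⟩
  have hn : n ≠ 0 := NeZero.ne n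
  have hnpos : 0 < n := Nat.pos_of_ne_zero hn
  set N : ℕ := p ^ (m' + 1) with hNdef
  set M : ℕ := p ^ m' with hMdef
  have hNM : N = p * M := by rw [hNdef, hMdef, pow_succ, mul_comm]
  have hppos : 0 < p := hp.pos
  have hMpos : 0 < M := pow_pos hppos m'
  have hN0 : N ≠ 0 := by positivity
  have hNpos : 0 < N := Nat.pos_of_ne_zero hN0
  -- f and t
  set f : G n → ZMod n := fun a => symp a x with hf
  have hNx : N • x = 0 := by rw [← hx]; exact addOrderOf_nsmul_eq_zero x
  have hdvd : ∀ a : G n, n ∣ N * (f a).val := by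
    intro a
    have h1 : (N : ZMod n) * f a = 0 := by
      have : symp a (N • x) = 0 := by rw [hNx]; simp [symp]
      have h2 : symp a (N • x) = (N : ZMod n) * symp a x := by
        have e1 : (N • x).1 = (N : ZMod n) * x.1 := by rw [Prod.smul_fst, nsmul_eq_mul]
        have e2 : (N • x).2 = (N : ZMod n) * x.2 := by rw [Prod.smul_snd, nsmul_eq_mul]
        simp only [symp, e1, e2]
        ring
      rw [h2] at this
      exact this
    have : ((N * (f a).val : ℕ) : ZMod n) = 0 := by
      push_cast
      rw [ZMod.natCast_val, ZMod.cast_id]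
      exact h1
    exact (ZMod.natCast_eq_zero_iff _ _).mp this
  set t : G n → ℕ := fun a => N * (f a).val / n with ht
  have htn : ∀ a, n * t a = N * (f a).val := fun a => Nat.mul_div_cancel' (hdvd a)
  have htlt : ∀ a, t a < N := by
    intro a
    nlinarith [htn a, ZMod.val_lt (f a), hNpos, hnpos]
  -- the root of unity
  set ζ : ℂ := Complex.exp (2 * Real.pi * Complex.I / N) with hζdef
  have hζ : IsPrimitiveRoot ζ N := Complex.isPrimitiveRoot_exp N hN0
  have hexp : ∀ a : G n,
      Complex.exp (2 * Real.pi * Complex.I * ((symp a x).val : ℂ) / (n : ℂ)) = ζ ^ t a := by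
    intro a
    rw [hζdef, ← Complex.exp_nat_mul]
    congr 1
    have hne : (n : ℂ) ≠ 0 := Nat.cast_ne_zero.mpr hn
    have hNe2 : (N : ℂ) ≠ 0 := Nat.cast_ne_zero.mpr hN0
    have hnat : (f a).val * N = t a * n := by
      rw [Nat.mul_comm ((f a).val) N, Nat.mul_comm (t a) n]
      exact (htn a).symm
    have key : (((f a).val : ℂ)) / (n : ℂ) = ((t a : ℂ)) / (N : ℂ) := by
      rw [div_eq_div_iff hne hNe2]
      exact_mod_cast congrArg (Nat.cast : ℕ → ℂ) hnat
    calc 2 * (Real.pi : ℂ) * Complex.I * ((symp a x).val : ℂ) / (n : ℂ)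
        = 2 * (Real.pi : ℂ) * Complex.I * (((f a).val : ℂ) / (n : ℂ)) := by rw [hf]; ring
      _ = 2 * (Real.pi : ℂ) * Complex.I * ((t a : ℂ) / (N : ℂ)) := by rw [key]
      _ = (t a : ℂ) * (2 * (Real.pi : ℂ) * Complex.I / (N : ℂ)) := by ring
  -- the exponential sums
  set S : ℕ → ℂ := fun u => ∑ a ∈ A, ζ ^ (u * t a) with hSdef
  have hS1 : S 1 = 0 := by
    rw [← hA]
    unfold sF
    apply Finset.sum_congr rfl
    intro a _
    rw [one_mul, hexp a]
  have hSu : ∀ u : ℕ, ¬ p ∣ u → S u = 0 := by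
    intro u hu
    set P : Polynomial ℚ := ∑ a ∈ A, Polynomial.X ^ (t a) with hPdef
    have hroot : Polynomial.aeval ζ P = 0 := by
      rw [hPdef, map_sum, ← hS1]
      apply Finset.sum_congr rfl
      intro a _
      simp
    have hdvdP : minpoly ℚ ζ ∣ P := minpoly.dvd ℚ ζ hroot
    have hcop : u.Coprime N := ((hp.coprime_iff_not_dvd.mpr hu).symm).pow_right _
    have hprim : IsPrimitiveRoot (ζ ^ u) N := hζ.pow_of_coprime u hcop
    have hmineq : minpoly ℚ (ζ ^ u) = minpoly ℚ ζ := by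
      rw [← Polynomial.cyclotomic_eq_minpoly_rat hprim hNpos,
        ← Polynomial.cyclotomic_eq_minpoly_rat hζ hNpos]
    have hroot2 : Polynomial.aeval (ζ ^ u) P = 0 := by
      obtain ⟨Q, hQ⟩ := hdvdP
      rw [hQ, map_mul, ← hmineq, minpoly.aeval, zero_mul]
    calc S u = Polynomial.aeval (ζ ^ u) P := by
          rw [hPdef, map_sum]
          apply Finset.sum_congr rfl
          intro a _
          rw [map_pow, Polynomial.aeval_X, ← pow_mul]
      _ = 0 := hroot2
  have hζN : ζ ^ N = 1 := hζ.pow_eq_one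
  -- claim A
  have claimA : ∑ k ∈ Finset.range N, S k
      = (N : ℂ) * ((A.filter (fun a => t a = 0)).card : ℂ) := by
    rw [show ∑ k ∈ Finset.range N, S k
        = ∑ a ∈ A, ∑ k ∈ Finset.range N, ζ ^ (k * t a) from Finset.sum_comm]
    have hstep : ∀ a ∈ A, ∑ k ∈ Finset.range N, ζ ^ (k * t a)
        = if t a = 0 then (N : ℂ) else 0 := by
      intro a _
      have h1 : ∑ k ∈ Finset.range N, ζ ^ (k * t a)
          = ∑ k ∈ Finset.range N, (ζ ^ t a) ^ k := by
        apply Finset.sum_congr rfl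
        intro k _
        rw [show k * t a = t a * k from Nat.mul_comm _ _, pow_mul]
      have hw : (ζ ^ t a) ^ N = 1 := by
        rw [← pow_mul, show t a * N = N * t a from Nat.mul_comm _ _, pow_mul, hζN, one_pow]
      rw [h1, geom_root _ hw]
      by_cases h0 : t a = 0
      · rw [if_pos h0, if_pos (by rw [h0, pow_zero])]
      · rw [if_neg h0, if_neg]
        intro hcontra
        exact h0 (Nat.eq_zero_of_dvd_of_lt ((hζ.pow_eq_one_iff_dvd _).mp hcontra) (htlt a))
    rw [Finset.sum_congr rfl hstep, ← Finset.sum_filter, Finset.sum_const, nsmul_eq_mul, mul_comm]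
  -- claim B
  have claimB : ∑ k ∈ Finset.range M, S (p * k)
      = (M : ℂ) * ((A.filter (fun a => M ∣ t a)).card : ℂ) := by
    rw [show ∑ k ∈ Finset.range M, S (p * k)
        = ∑ a ∈ A, ∑ k ∈ Finset.range M, ζ ^ (p * k * t a) from Finset.sum_comm]
    have hstep : ∀ a ∈ A, ∑ k ∈ Finset.range M, ζ ^ (p * k * t a)
        = if M ∣ t a then (M : ℂ) else 0 := by
      intro a _
      have h1 : ∑ k ∈ Finset.range M, ζ ^ (p * k * t a)
          = ∑ k ∈ Finset.range M, (ζ ^ (p * t a)) ^ k := by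
        apply Finset.sum_congr rfl
        intro k _
        rw [show p * k * t a = p * t a * k from by ring, pow_mul]
      have hw : (ζ ^ (p * t a)) ^ M = 1 := by
        rw [← pow_mul, show p * t a * M = N * t a from by rw [hNM]; ring, pow_mul, hζN, one_pow]
      have hiff : ζ ^ (p * t a) = 1 ↔ M ∣ t a := by
        rw [hζ.pow_eq_one_iff_dvd, hNM]
        exact mul_dvd_mul_iff_left hppos.ne'
      rw [h1, geom_root _ hw]
      by_cases h0 : M ∣ t a
      · rw [if_pos (hiff.mpr h0), if_pos h0]
      · rw [if_neg (fun h => h0 (hiff.mp h)), if_neg h0]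
    rw [Finset.sum_congr rfl hstep, ← Finset.sum_filter, Finset.sum_const, nsmul_eq_mul, mul_comm]
  -- claim C
  have claimC : ∑ k ∈ Finset.range N, S k = ∑ k ∈ Finset.range M, S (p * k) := by
    have hne : ∀ k ∈ Finset.range N, S k ≠ 0 → p ∣ k := by
      intro k _ hk
      by_contra h
      exact hk (hSu k h)
    rw [← Finset.sum_filter_of_ne hne]
    have himg : (Finset.range N).filter (fun k => p ∣ k)
        = (Finset.range M).image (fun k => p * k) := by
      ext k
      simp only [Finset.mem_filter, Finset.mem_range, Finset.mem_image]
      constructor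
      · rintro ⟨hkN, j, rfl⟩
        refine ⟨j, ?_, rfl⟩
        rw [hNM] at hkN
        exact lt_of_mul_lt_mul_left hkN (Nat.zero_le p)
      · rintro ⟨j, hj, rfl⟩
        refine ⟨?_, ⟨j, rfl⟩⟩
        rw [hNM]
        exact Nat.mul_lt_mul_of_le_of_lt (le_refl p) hj hppos
    rw [himg, Finset.sum_image (fun a _ b _ h => Nat.eq_of_mul_eq_mul_left hppos h)]
  -- arithmetic relation between the two products in ℂ
  have hcomplex : (N : ℂ) * ((A.filter (fun a => t a = 0)).card : ℂ)
      = (M : ℂ) * ((A.filter (fun a => M ∣ t a)).card : ℂ) := by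
    rw [← claimA, ← claimB, claimC]
  have hnat : N * (A.filter (fun a => t a = 0)).card
      = M * (A.filter (fun a => M ∣ t a)).card := by exact_mod_cast hcomplex
  -- identify the two sets with the filters
  have hfzero : ∀ a : G n, symp a x = 0 ↔ t a = 0 := by
    intro a
    have hval : (f a).val = (symp a x).val := rfl
    rw [← ZMod.val_eq_zero]
    constructor
    · intro h
      have h2 := htn a
      rw [hval, h, Nat.mul_zero] at h2
      exact (Nat.mul_eq_zero.mp h2).resolve_left hn
    · intro h
      have h2 := htn a
      rw [h, Nat.mul_zero] at h2
      have := (Nat.mul_eq_zero.mp h2.symm).resolve_left hN0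
      rw [hval] at this
      exact this
  have hdvd2 : ∀ a : G n, (n ∣ p * (symp a x).val) ↔ M ∣ t a := by
    intro a
    have hval : (f a).val = (symp a x).val := rfl
    have hN_dvd : (N ∣ p * t a) ↔ M ∣ t a := by
      rw [hNM]
      exact mul_dvd_mul_iff_left hppos.ne'
    rw [← hN_dvd]
    constructor
    · rintro ⟨c, hc⟩
      refine ⟨c, ?_⟩
      have h1 : n * (p * t a) = n * (N * c) := by
        calc n * (p * t a) = p * (n * t a) := by ring
          _ = p * (N * (f a).val) := by rw [htn a]
          _ = N * (p * (symp a x).val) := by rw [hval]; ring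
          _ = N * (n * c) := by rw [hc]
          _ = n * (N * c) := by ring
      exact Nat.eq_of_mul_eq_mul_left hnpos h1
    · rintro ⟨d, hd⟩
      refine ⟨d, ?_⟩
      have h1 : N * (p * (symp a x).val) = N * (n * d) := by
        calc N * (p * (symp a x).val) = p * (N * (f a).val) := by rw [hval]; ring
          _ = p * (n * t a) := by rw [htn a]
          _ = n * (p * t a) := by ring
          _ = n * (N * d) := by rw [hd]
          _ = N * (n * d) := by ring
      exact Nat.eq_of_mul_eq_mul_left hNpos h1
  have hsymp_p : ∀ a : G n, symp a (p • x) = 0 ↔ M ∣ t a := by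
    intro a
    have e : symp a (p • x) = (p : ZMod n) * symp a x := by
      have e1 : (p • x).1 = (p : ZMod n) * x.1 := by rw [Prod.smul_fst, nsmul_eq_mul]
      have e2 : (p • x).2 = (p : ZMod n) * x.2 := by rw [Prod.smul_snd, nsmul_eq_mul]
      simp only [symp, e1, e2]
      ring
    have e3 : (p : ZMod n) * symp a x = ((p * (symp a x).val : ℕ) : ZMod n) := by
      push_cast
      rw [ZMod.natCast_val, ZMod.cast_id]
    rw [e, e3, ZMod.natCast_eq_zero_iff]
    exact hdvd2 a
  have hset1 : ((A : Set (G n)) ∩ perpS ((AddSubgroup.zmultiples x : AddSubgroup (G n)) : Set (G n)))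
      = ↑(A.filter (fun a => t a = 0)) := by
    ext a
    simp only [Set.mem_inter_iff, Finset.coe_filter, Set.mem_setOf_eq, Finset.mem_coe,
      mem_perpS_zmultiples, hfzero a]
  have hset2 : ((A : Set (G n)) ∩ perpS ((AddSubgroup.zmultiples (p • x) : AddSubgroup (G n)) : Set (G n)))
      = ↑(A.filter (fun a => M ∣ t a)) := by
    ext a
    simp only [Set.mem_inter_iff, Finset.coe_filter, Set.mem_setOf_eq, Finset.mem_coe,
      mem_perpS_zmultiples, hsymp_p a]
  rw [hset1, hset2, Set.ncard_coe_finset, Set.ncard_coe_finset]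
  rw [hNM] at hnat
  have hfin : M * (p * (A.filter (fun a => t a = 0)).card)
      = M * (A.filter (fun a => M ∣ t a)).card := by
    rw [← hnat]; ring
  exact (Nat.eq_of_mul_eq_mul_left hMpos hfin).symm
end
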